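/- If pointed model (M2,s2) simulates pointed model (M1,s1) over AP, then for every ACTL* state formula ψ built only from atomic propositions in AP, M2,s2 ⊨ ψ implies M1,s1 ⊨ ψ. -/
import Mathlib


mutual
/-- ACTL* state formulae. -/
inductive SF (A : Type) : Type where
  | tt : SF A
  | ff : SF A
  | atom (a : A) : SF A
  | natom (a : A) : SF A
  | and (ψ₁ ψ₂ : SF A) : SF A
  | or (ψ₁ ψ₂ : SF A) : SF A
  | all (φ : PF A) : SF A
/-- ACTL* path formulae. -/
inductive PF (A : Type) : Type where
  | st (ψ : SF A) : PF A
  | and (φ₁ φ₂ : PF A) : PF A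
  | or (φ₁ φ₂ : PF A) : PF A
  | next (φ : PF A) : PF A
  | until_ (φ₁ φ₂ : PF A) : PF A
end

def IsPath {S : Type} (tr : S → S → Prop) (π : ℕ → S) : Prop := ∀ i, tr (π i) (π (i+1))

mutual
/-- Satisfaction of ACTL* state formulae. -/
def sat {S A : Type} (tr : S → S → Prop) (L : S → Set A) : SF A → S → Prop
  | .tt, _ => True
  | .ff, _ => False
  | .atom a, s => a ∈ L s
  | .natom a, s => a ∉ L s
  | .and ψ₁ ψ₂, s => sat tr L ψ₁ s ∧ sat tr L ψ₂ s
  | .or ψ₁ ψ₂, s => sat tr L ψ₁ s ∨ sat tr L ψ₂ s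
  | .all φ, s => ∀ π : ℕ → S, IsPath tr π → π 0 = s → psat tr L φ π
/-- Satisfaction of ACTL* path formulae. -/
def psat {S A : Type} (tr : S → S → Prop) (L : S → Set A) : PF A → (ℕ → S) → Prop
  | .st ψ, π => sat tr L ψ (π 0)
  | .and φ₁ φ₂, π => psat tr L φ₁ π ∧ psat tr L φ₂ π
  | .or φ₁ φ₂, π => psat tr L φ₁ π ∨ psat tr L φ₂ π
  | .next φ, π => psat tr L φ (fun i => π (i+1))
  | .until_ φ₁ φ₂, π => ∃ j, psat tr L φ₂ (fun i => π (j+i)) ∧ ∀ i < j, psat tr L φ₁ (fun k => π (i+k))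
end

mutual
/-- Atomic propositions occurring in a state formula. -/
def props {A : Type} : SF A → Set A
  | .tt | .ff => ∅
  | .atom a | .natom a => {a}
  | .and ψ₁ ψ₂ | .or ψ₁ ψ₂ => props ψ₁ ∪ props ψ₂
  | .all φ => pprops φ
/-- Atomic propositions occurring in a path formula. -/
def pprops {A : Type} : PF A → Set A
  | .st ψ => props ψ
  | .and φ₁ φ₂ | .or φ₁ φ₂ | .until_ φ₁ φ₂ => pprops φ₁ ∪ pprops φ₂
  | .next φ => pprops φ
end

/-- R is a simulation over AP (label agreement and transition matching). -/
def IsSim {S1 S2 A : Type} (AP : Set A)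
    (tr1 : S1 → S1 → Prop) (L1 : S1 → Set A)
    (tr2 : S2 → S2 → Prop) (L2 : S2 → Set A)
    (R : S1 → S2 → Prop) : Prop :=
  ∀ s1 s2, R s1 s2 →
    (L1 s1 ∩ AP = L2 s2 ∩ AP) ∧
    (∀ s1', tr1 s1 s1' → ∃ s2', tr2 s2 s2' ∧ R s1' s2')


/-- (M1,s1) ⪯_AP (M2,s2). -/
def PointedSim {S1 S2 A : Type} (AP : Set A)
    (tr1 : S1 → S1 → Prop) (L1 : S1 → Set A) (s1 : S1)
    (tr2 : S2 → S2 → Prop) (L2 : S2 → Set A) (s2 : S2) : Prop :=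
  ∃ R : S1 → S2 → Prop, IsSim AP tr1 L1 tr2 L2 R ∧ R s1 s2

lemma path_lift {S1 S2 A : Type} {AP : Set A}
    {tr1 : S1 → S1 → Prop} {L1 : S1 → Set A}
    {tr2 : S2 → S2 → Prop} {L2 : S2 → Set A}
    {R : S1 → S2 → Prop} (hR : IsSim AP tr1 L1 tr2 L2 R)
    (π1 : ℕ → S1) (hp : IsPath tr1 π1) (s2 : S2) (h0 : R (π1 0) s2) :
    ∃ π2 : ℕ → S2, IsPath tr2 π2 ∧ π2 0 = s2 ∧ ∀ i, R (π1 i) (π2 i) := by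
  have step : ∀ n (t : {t : S2 // R (π1 n) t}),
      {t' : S2 // R (π1 (n+1)) t' ∧ tr2 t.1 t'} := by
    intro n t
    have h := (hR _ _ t.2).2 (π1 (n+1)) (hp n)
    exact ⟨h.choose, h.choose_spec.2, h.choose_spec.1⟩
  let F : ∀ n : ℕ, {t : S2 // R (π1 n) t} :=
    fun n => Nat.rec ⟨s2, h0⟩ (fun n t => ⟨(step n t).1, (step n t).2.1⟩) n
  refine ⟨fun n => (F n).1, fun n => ?_, rfl, fun n => (F n).2⟩
  exact (step n (F n)).2.2

mutual
theorem sat_mono {S1 S2 A : Type} {AP : Set A}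
    {tr1 : S1 → S1 → Prop} {L1 : S1 → Set A}
    {tr2 : S2 → S2 → Prop} {L2 : S2 → Set A}
    {R : S1 → S2 → Prop} (hR : IsSim AP tr1 L1 tr2 L2 R)
    (ψ : SF A) (hψ : props ψ ⊆ AP) (s1 : S1) (s2 : S2) (h : R s1 s2) :
    sat tr2 L2 ψ s2 → sat tr1 L1 ψ s1 := by
  have hlab := (hR s1 s2 h).1
  cases ψ with
  | tt => intro _; trivial
  | ff => exact id
  | atom a =>
    intro ha
    have hAP : a ∈ AP := hψ (by simp [props])
    have : a ∈ L2 s2 ∩ AP := ⟨ha, hAP⟩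
    rw [← hlab] at this
    exact this.1
  | natom a =>
    intro ha ha1
    have hAP : a ∈ AP := hψ (by simp [props])
    have : a ∈ L1 s1 ∩ AP := ⟨ha1, hAP⟩
    rw [hlab] at this
    exact ha this.1
  | and ψ₁ ψ₂ =>
    intro ⟨h1, h2⟩
    exact ⟨sat_mono hR ψ₁ (fun a ha => hψ (Or.inl ha)) s1 s2 h h1,
           sat_mono hR ψ₂ (fun a ha => hψ (Or.inr ha)) s1 s2 h h2⟩
  | or ψ₁ ψ₂ =>
    intro h12
    cases h12 with
    | inl h1 => exact Or.inl (sat_mono hR ψ₁ (fun a ha => hψ (Or.inl ha)) s1 s2 h h1)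
    | inr h2 => exact Or.inr (sat_mono hR ψ₂ (fun a ha => hψ (Or.inr ha)) s1 s2 h h2)
  | all φ =>
    intro hall π1 hp1 h01
    obtain ⟨π2, hp2, h02, hrel⟩ := path_lift hR π1 hp1 s2 (h01 ▸ h)
    exact psat_mono hR φ hψ π1 π2 hp1 hrel (hall π2 hp2 h02)

theorem psat_mono {S1 S2 A : Type} {AP : Set A}
    {tr1 : S1 → S1 → Prop} {L1 : S1 → Set A}
    {tr2 : S2 → S2 → Prop} {L2 : S2 → Set A}
    {R : S1 → S2 → Prop} (hR : IsSim AP tr1 L1 tr2 L2 R)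
    (φ : PF A) (hφ : pprops φ ⊆ AP) (π1 : ℕ → S1) (π2 : ℕ → S2)
    (hp1 : IsPath tr1 π1) (hrel : ∀ i, R (π1 i) (π2 i)) :
    psat tr2 L2 φ π2 → psat tr1 L1 φ π1 := by
  cases φ with
  | st ψ => exact sat_mono hR ψ hφ (π1 0) (π2 0) (hrel 0)
  | and φ₁ φ₂ =>
    intro ⟨h1, h2⟩
    exact ⟨psat_mono hR φ₁ (fun a ha => hφ (Or.inl ha)) π1 π2 hp1 hrel h1,
           psat_mono hR φ₂ (fun a ha => hφ (Or.inr ha)) π1 π2 hp1 hrel h2⟩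
  | or φ₁ φ₂ =>
    intro h12
    cases h12 with
    | inl h1 => exact Or.inl (psat_mono hR φ₁ (fun a ha => hφ (Or.inl ha)) π1 π2 hp1 hrel h1)
    | inr h2 => exact Or.inr (psat_mono hR φ₂ (fun a ha => hφ (Or.inr ha)) π1 π2 hp1 hrel h2)
  | next φ =>
    intro hn
    exact psat_mono hR φ hφ (fun i => π1 (i+1)) (fun i => π2 (i+1))
      (fun i => hp1 (i+1)) (fun i => hrel (i+1)) hn
  | until_ φ₁ φ₂ =>
    intro ⟨j, h2, h1⟩
    refine ⟨j, psat_mono hR φ₂ (fun a ha => hφ (Or.inr ha)) (fun i => π1 (j+i))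
      (fun i => π2 (j+i)) (fun i => hp1 (j+i)) (fun i => hrel (j+i)) h2,
      fun i hij => psat_mono hR φ₁ (fun a ha => hφ (Or.inl ha)) (fun k => π1 (i+k))
      (fun k => π2 (i+k)) (fun k => hp1 (i+k)) (fun k => hrel (i+k)) (h1 i hij)⟩
end

theorem simulation_preserves_ACTLs {S1 S2 A : Type} (AP : Set A)
    (tr1 : S1 → S1 → Prop) (L1 : S1 → Set A) (s1 : S1)
    (tr2 : S2 → S2 → Prop) (L2 : S2 → Set A) (s2 : S2)
    (hser1 : ∀ s, ∃ s', tr1 s s') (hser2 : ∀ s, ∃ s', tr2 s s')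
    (hsim : PointedSim AP tr1 L1 s1 tr2 L2 s2)
    (ψ : SF A) (hψ : props ψ ⊆ AP) :
    sat tr2 L2 ψ s2 → sat tr1 L1 ψ s1 := by
  obtain ⟨R, hR, h⟩ := hsim
  exact sat_mono hR ψ hψ s1 s2 h
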